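/- arXiv:0804.3667 — 2 statements merged into one kernel-verified Lean document; each statement's English description precedes it below -/
import Mathlib

section
/- In the setup below, if y is a point in the cone spanned by k vertices of P, then |V^+(y)| ≤ |Z^−(y)| + k. -/
open scoped BigOperators Pointwise

noncomputable section

/-- A point of `ℝ^m` with integer coordinates (a lattice point). -/
def IsLatticePoint {m : ℕ} (v : Fin m → ℝ) : Prop := ∀ i, ∃ z : ℤ, v i = (z : ℝ)

/-- `P` is a lattice polytope in `ℝ^m`: the convex hull of a nonempty finite set of
lattice points. -/
def IsLatticePolytope {m : ℕ} (P : Set (Fin m → ℝ)) : Prop :=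
  ∃ V : Finset (Fin m → ℝ), V.Nonempty ∧ (∀ v ∈ V, IsLatticePoint v) ∧
    P = convexHull ℝ (V : Set (Fin m → ℝ))

/-- The number of lattice points contained in a subset of `ℝ^m`. -/
def latticePointCount {m : ℕ} (A : Set (Fin m → ℝ)) : ℕ :=
  Set.ncard {z : Fin m → ℤ | (fun i => (z i : ℝ)) ∈ A}

/-- `h` is the `h^*`-polynomial of the full-dimensional lattice polytope `P ⊆ ℝ^n`:
its coefficients are nonnegative, it has degree at most `n`, and the Ehrhart counting
function of `P` is given by `|mP ∩ ℤ^n| = ∑_i h_i * C(n + m - i, n)`, which is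
equivalent to `∑_m |mP ∩ ℤ^n| t^m = h(t)/(1-t)^{n+1}`. -/
def IsHStarPoly {n : ℕ} (P : Set (Fin n → ℝ)) (h : Polynomial ℤ) : Prop :=
  h.natDegree ≤ n ∧ (∀ i, 0 ≤ h.coeff i) ∧
    ∀ m : ℕ, (latticePointCount ((m : ℝ) • P) : ℤ) =
      ∑ i ∈ Finset.range (n + 1), h.coeff i * ((n + m - i).choose n : ℤ)

/-- The normalized volume of a (full-dimensional) polytope in `ℝ^m`:
`m!` times its Euclidean volume. -/
def normVol {m : ℕ} (P : Set (Fin m → ℝ)) : ℝ :=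
  (Nat.factorial m : ℝ) * (MeasureTheory.volume P).toReal

/-- The point of `ℝ^s` over which the `j`-th summand of a Cayley sum sits:
`0` for `j = 0`, and the standard basis vector `e_j` for `j = 1, …, s`. -/
def cayleyVertex (s : ℕ) (j : Fin (s + 1)) : Fin s → ℝ :=
  fun i => if (i : ℕ) + 1 = (j : ℕ) then 1 else 0

/-- The Cayley sum `P_0 * ⋯ * P_s ⊆ ℝ^q × ℝ^s` of polytopes `P_0, …, P_s ⊆ ℝ^q`:
the convex hull of `(P_0 × {0}) ∪ (P_1 × {e_1}) ∪ ⋯ ∪ (P_s × {e_s})`. -/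
def CayleySum {q s : ℕ} (Ps : Fin (s + 1) → Set (Fin q → ℝ)) :
    Set ((Fin q → ℝ) × (Fin s → ℝ)) :=
  convexHull ℝ (⋃ j : Fin (s + 1), (fun p => (p, cayleyVertex s j)) '' Ps j)

/-- A lattice point of `ℝ^q × ℝ^s`. -/
def IsLatticePointPair {q s : ℕ} (v : (Fin q → ℝ) × (Fin s → ℝ)) : Prop :=
  IsLatticePoint v.1 ∧ IsLatticePoint v.2

/-- An affine isomorphism `ℝ^n ≅ ℝ^q × ℝ^s` is a `ℤ`-affine linear change of coordinates
if it identifies the lattice `ℤ^n` with the lattice `ℤ^q × ℤ^s`. -/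
def IsLatticeEquiv {n q s : ℕ} (T : (Fin n → ℝ) ≃ᵃ[ℝ] (Fin q → ℝ) × (Fin s → ℝ)) : Prop :=
  ∀ v : Fin n → ℝ, IsLatticePoint v ↔ IsLatticePointPair (T v)


/-!
Suppose `|V⁺(y)| > |Z⁻(y)| + k` and write `y = ∑ c_t w_t`. Adding copies of `v_0` to the lattice
point `x + ∑ w_t + ∑_{Z⁻(y)} v_i - ∑_{V⁺(y)} v_j` brings it to height `n - d`. It stays in the
interior of the cone over `P`: after inserting `ε y - ∑ ε c_t w_t = 0` for a small `ε > 0`, the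
coefficient of `v_j`, `j ∈ V⁺(y)`, is `b_j(x) - 1 + ε b_j(y) > 0`, that of `v_i`, `i ∈ Z⁻(y)`, is
`1 + ε b_i(y) > 0`, and all other coefficients stay nonnegative, and positive wherever `b(x)` is.
So it is a lattice point in the relative interior of `(n - d) P`, contradicting the degree.
-/
open Set Filter Topology

def latticePoints (m : ℕ) : AddSubgroup (Fin m → ℝ) where
  carrier := {v | IsLatticePoint v}
  add_mem' {u w} hu hw i := by
    obtain ⟨a, ha⟩ := hu i
    obtain ⟨b, hb⟩ := hw i
    exact ⟨a + b, by simp [ha, hb]⟩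
  zero_mem' _ := ⟨0, by simp⟩
  neg_mem' {u} hu i := by
    obtain ⟨a, ha⟩ := hu i
    exact ⟨-a, by simp [ha]⟩

theorem IsLatticePoint.exists_intCast_eq {m : ℕ} {v : Fin m → ℝ} (hv : IsLatticePoint v) :
    ∃ z : Fin m → ℤ, (fun i => (z i : ℝ)) = v :=
  ⟨fun i => (hv i).choose, funext fun i => (hv i).choose_spec.symm⟩

theorem pos_of_forall_notMem_intrinsicInterior_smul {N m : ℕ} {P : Set (Fin N → ℝ)}
    (hne : P.Nonempty)
    (h : ∀ z : Fin N → ℤ, (fun i => (z i : ℝ)) ∉ intrinsicInterior ℝ ((m : ℝ) • P)) : 0 < m := by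
  by_contra! h0
  refine h 0 ?_
  rw [Nat.le_zero.1 h0, Nat.cast_zero, zero_smul_set hne, ← Set.singleton_zero,
    intrinsicInterior_singleton]
  simp [Pi.zero_def]

theorem eventually_pos_add_mul {κ : ℝ} (hκ : 0 < κ) (β : ℝ) :
    ∀ᶠ ε in 𝓝 (0 : ℝ), 0 < κ + ε * β := by
  have h : Tendsto (fun ε : ℝ => κ + ε * β) (𝓝 0) (𝓝 (κ + 0 * β)) :=
    tendsto_const_nhds.add (tendsto_id.mul_const β)
  rw [zero_mul, add_zero] at h
  exact h.eventually (lt_mem_nhds hκ)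

namespace PointedCone

variable {E : Type*} [AddCommGroup E] [Module ℝ E] [TopologicalSpace E] {C : PointedCone ℝ E}

theorem add_mem_interior [IsTopologicalAddGroup E] {z w : E} (hz : z ∈ interior (C : Set E))
    (hw : w ∈ C) : z + w ∈ interior (C : Set E) :=
  interior_maximal (by rintro _ ⟨a, ha, b, hb, rfl⟩; exact C.add_mem (interior_subset ha) hb)
    isOpen_interior.add_right (Set.add_mem_add hz hw)

theorem smul_mem_interior [ContinuousConstSMul ℝ E] {z : E} {α : ℝ} (hα : 0 < α)
    (hz : z ∈ interior (C : Set E)) : α • z ∈ interior (C : Set E) :=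
  interior_maximal (by rintro _ ⟨a, ha, rfl⟩; exact C.smul_mem hα.le (interior_subset ha))
    (isOpen_interior.smul₀ hα.ne') (Set.smul_mem_smul_set hz)

theorem smul_mem_interior_iff [ContinuousConstSMul ℝ E] {z : E} {α : ℝ} (hα : 0 < α) :
    α • z ∈ interior (C : Set E) ↔ z ∈ interior (C : Set E) :=
  ⟨fun h => inv_smul_smul₀ hα.ne' z ▸ smul_mem_interior (inv_pos.2 hα) h, smul_mem_interior hα⟩

theorem sum_smul_mem_interior [IsTopologicalAddGroup E] [ContinuousConstSMul ℝ E] {ι : Type*}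
    [Fintype ι] {v : ι → E} (hv : ∀ i, v i ∈ C) {a μ : ι → ℝ}
    (ha : ∑ i, a i • v i ∈ interior (C : Set E)) (hμ : ∀ i, 0 ≤ μ i)
    (hμa : ∀ i, 0 < a i → 0 < μ i) : ∑ i, μ i • v i ∈ interior (C : Set E) := by
  have hsmall : ∀ᶠ α in 𝓝[>] (0 : ℝ), ∀ i, α * a i ≤ μ i := by
    refine eventually_all.2 fun i => ?_
    rcases lt_or_ge 0 (a i) with hai | hai
    · filter_upwards [nhdsWithin_le_nhds (eventually_pos_add_mul (hμa i hai) (-a i))]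
        with α hα
      linarith
    · filter_upwards [self_mem_nhdsWithin] with α (hα : 0 < α)
      nlinarith [hμ i]
  obtain ⟨α, hαμ, hα⟩ := (hsmall.and self_mem_nhdsWithin).exists
  have hsplit : ∑ i, μ i • v i = α • ∑ i, a i • v i + ∑ i, (μ i - α * a i) • v i := by
    simp only [Finset.smul_sum, smul_smul, sub_smul, Finset.sum_sub_distrib]
    abel
  rw [hsplit]
  exact add_mem_interior (smul_mem_interior hα ha)
    (C.sum_mem fun i _ => C.smul_mem (sub_nonneg.2 (hαμ i)) (hv i))

end PointedCone

section ConeOverSlice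

variable {E : Type*} [NormedAddCommGroup E] [NormedSpace ℝ E] {P : Set E} {ℓ : E →L[ℝ] ℝ}

theorem Convex.exists_smul_eq_of_mem_hull (hP : Convex ℝ P) (hne : P.Nonempty) {z : E}
    (hz : z ∈ PointedCone.hull ℝ P) : ∃ t : ℝ, 0 ≤ t ∧ ∃ p ∈ P, t • p = z := by
  induction hz using Submodule.span_induction with
  | mem p hp => exact ⟨1, zero_le_one, p, hp, one_smul ℝ p⟩
  | zero =>
    obtain ⟨p, hp⟩ := hne
    exact ⟨0, le_rfl, p, hp, zero_smul ℝ p⟩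
  | add z₁ z₂ _ _ h₁ h₂ =>
    obtain ⟨t₁, ht₁, p₁, hp₁, rfl⟩ := h₁
    obtain ⟨t₂, ht₂, p₂, hp₂, rfl⟩ := h₂
    rcases (add_nonneg ht₁ ht₂).eq_or_lt with h | h
    · obtain ⟨rfl, rfl⟩ : t₁ = 0 ∧ t₂ = 0 := ⟨by linarith, by linarith⟩
      exact ⟨0, le_rfl, p₁, hp₁, by simp⟩
    · refine ⟨t₁ + t₂, h.le, (t₁ / (t₁ + t₂)) • p₁ + (t₂ / (t₁ + t₂)) • p₂,
        hP hp₁ hp₂ (by positivity) (by positivity) (by field_simp), ?_⟩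
      rw [smul_add, smul_smul, smul_smul, mul_div_cancel₀ _ h.ne', mul_div_cancel₀ _ h.ne']
  | smul a z _ h =>
    obtain ⟨t, ht, p, hp, rfl⟩ := h
    exact ⟨a * t, mul_nonneg a.2 ht, p, hp, by rw [mul_smul]; rfl⟩

theorem mem_of_mem_hull_of_apply_eq_one (hP : Convex ℝ P) (hne : P.Nonempty)
    (hℓ : ∀ p ∈ P, ℓ p = 1) {z : E} (hz : z ∈ PointedCone.hull ℝ P) (hz1 : ℓ z = 1) : z ∈ P := by
  obtain ⟨t, -, p, hp, rfl⟩ := hP.exists_smul_eq_of_mem_hull hne hz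
  rw [map_smul, hℓ p hp, smul_eq_mul, mul_one] at hz1
  rwa [hz1, one_smul]

theorem intrinsicInterior_eq_interior_hull_inter (hP : Convex ℝ P) (hne : P.Nonempty)
    (hspan : (affineSpan ℝ P : Set E) = ℓ ⁻¹' {1}) :
    intrinsicInterior ℝ P = interior (PointedCone.hull ℝ P : Set E) ∩ ℓ ⁻¹' {1} := by
  have hmem : ∀ w, w ∈ affineSpan ℝ P ↔ ℓ w = 1 := fun w => by
    rw [← SetLike.mem_coe, hspan]; rfl
  have hℓ : ∀ p ∈ P, ℓ p = 1 := fun p hp => (hmem p).1 (subset_affineSpan ℝ P hp)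
  ext z
  constructor
  · rintro ⟨z, hz, rfl⟩
    have hz1 : ℓ z = 1 := (hmem z).1 z.2
    refine ⟨?_, hz1⟩
    obtain ⟨U, hU, hUP⟩ := (mem_nhds_subtype _ _ _).1 (mem_interior_iff_mem_nhds.1 hz)
    -- rescaling to the hyperplane is continuous near `z`, so it keeps nearby points inside `U`
    have hcont : ContinuousAt (fun w => (ℓ w)⁻¹ • w) (z : E) :=
      (ℓ.continuous.continuousAt.inv₀ (by simp [hz1])).smul continuousAt_id
    have hfix : (ℓ z)⁻¹ • (z : E) = z := by rw [hz1, inv_one, one_smul]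
    rw [mem_interior_iff_mem_nhds]
    filter_upwards [hcont.preimage_mem_nhds (hfix ▸ hU),
      continuousAt_const.eventually_lt ℓ.continuous.continuousAt (by simp [hz1] : (0 : ℝ) < ℓ z)]
      with w hwU hw
    have hw1 : ℓ ((ℓ w)⁻¹ • w) = 1 := by rw [map_smul, smul_eq_mul, inv_mul_cancel₀ hw.ne']
    have hwP : (ℓ w)⁻¹ • w ∈ P :=
      hUP (show ((⟨_, (hmem _).2 hw1⟩ : affineSpan ℝ P) : E) ∈ U from hwU)
    simpa [smul_smul, mul_inv_cancel₀ hw.ne'] using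
      (PointedCone.hull ℝ P).smul_mem hw.le (PointedCone.subset_hull hwP)
  · rintro ⟨hz, hz1⟩
    have hzA : z ∈ affineSpan ℝ P := (hmem z).2 hz1
    refine ⟨⟨z, hzA⟩, mem_interior_iff_mem_nhds.2 ((mem_nhds_subtype _ _ _).2
      ⟨_, isOpen_interior.mem_nhds hz, fun w hw => ?_⟩), rfl⟩
    have hw1 : ℓ w = 1 := (hmem w).1 w.2
    exact mem_of_mem_hull_of_apply_eq_one hP hne hℓ (interior_subset hw) hw1

theorem mem_intrinsicInterior_smul_iff (hP : Convex ℝ P) (hne : P.Nonempty)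
    (hspan : (affineSpan ℝ P : Set E) = ℓ ⁻¹' {1}) {c : ℝ} (hc : 0 < c) {z : E} :
    z ∈ intrinsicInterior ℝ (c • P) ↔
      z ∈ interior (PointedCone.hull ℝ P : Set E) ∧ ℓ z = c := by
  have himage : intrinsicInterior ℝ (c • P) = c • intrinsicInterior ℝ P := by
    have h := ContinuousAffineEquiv.intrinsicInterior_image
      (ContinuousLinearEquiv.smulLeft (R₁ := ℝ) (Units.mk0 c hc.ne')).toContinuousAffineEquiv P
    have hfun : ⇑(ContinuousLinearEquiv.smulLeft (R₁ := ℝ) (M₁ := E) (Units.mk0 c hc.ne')) =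
        (c • ·) := rfl
    simpa only [ContinuousLinearEquiv.coe_toContinuousAffineEquiv, hfun, Set.image_smul] using h
  rw [himage, mem_smul_set_iff_inv_smul_mem₀ hc.ne',
    intrinsicInterior_eq_interior_hull_inter hP hne hspan, mem_inter_iff,
    PointedCone.smul_mem_interior_iff (inv_pos.2 hc), mem_preimage, mem_singleton_iff, map_smul,
    smul_eq_mul, inv_mul_eq_one₀ hc.ne', eq_comm]

theorem coe_affineSpan_eq_preimage [FiniteDimensional ℝ E] (hℓ : ∀ p ∈ P, ℓ p = 1)
    {p₀ : E} (hp₀ : p₀ ∈ P)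
    (hdim : Module.finrank ℝ (vectorSpan ℝ P) + 1 = Module.finrank ℝ E) :
    (affineSpan ℝ P : Set E) = ℓ ⁻¹' {1} := by
  have hsurj : Function.Surjective ℓ := fun r => ⟨r • p₀, by simp [hℓ p₀ hp₀]⟩
  have hker : Module.finrank ℝ (LinearMap.ker (ℓ : E →ₗ[ℝ] ℝ)) + 1 = Module.finrank ℝ E := by
    have := LinearMap.finrank_range_add_finrank_ker (ℓ : E →ₗ[ℝ] ℝ)
    rw [LinearMap.range_eq_top.2 hsurj, finrank_top, Module.finrank_self] at this
    omega
  have hle : vectorSpan ℝ P ≤ LinearMap.ker (ℓ : E →ₗ[ℝ] ℝ) := by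
    refine Submodule.span_le.2 ?_
    rintro _ ⟨p, hp, q, hq, rfl⟩
    simp [hℓ p hp, hℓ q hq]
  have heq := Submodule.eq_of_le_of_finrank_le hle (by omega)
  ext z
  rw [SetLike.mem_coe, ← AffineSubspace.vsub_right_mem_direction_iff_mem
    (subset_affineSpan ℝ P hp₀), direction_affineSpan, heq]
  simp [hℓ p₀ hp₀, sub_eq_zero]

theorem apply_add_sum_sub_sum_add_nsmul {ι : Type*} {k : ℕ} {v : ι → E} {w : Fin k → E}
    (hv : ∀ i, ℓ (v i) = 1) (hw : ∀ t, ℓ (w t) = 1) (x : E) (A B : Finset ι) (N : ℕ) (i₀ : ι) :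
    ℓ (x + ∑ t, w t + ∑ i ∈ B, v i - ∑ i ∈ A, v i + N • v i₀) =
      ℓ x + k + B.card - A.card + N := by
  simp only [map_add, map_sub, map_sum, map_nsmul, hv, hw, Finset.sum_const, Finset.card_univ,
    Fintype.card_fin, nsmul_eq_mul, mul_one]

end ConeOverSlice

section Shift

variable {ι : Type*} [DecidableEq ι] {a β : ι → ℝ} {A B : Finset ι}

theorem eventually_coeff_nonneg_and_pos (ha : ∀ i, 0 ≤ a i) (hA : ∀ i ∈ A, 1 ≤ a i ∧ 0 < β i)
    (hB : ∀ i ∈ B, a i = 0) (hβ : ∀ i ∉ B, a i = 0 → 0 ≤ β i) (i : ι) :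
    ∀ᶠ ε in 𝓝[>] (0 : ℝ),
      let μ := a i + ε * β i - (if i ∈ A then 1 else 0) + (if i ∈ B then 1 else 0)
      0 ≤ μ ∧ (0 < a i → 0 < μ) := by
  by_cases hiA : i ∈ A
  · have hiB : i ∉ B := fun hiB => by linarith [(hA i hiA).1, hB i hiB]
    filter_upwards [self_mem_nhdsWithin] with ε (hε : 0 < ε)
    have := mul_pos hε (hA i hiA).2
    simp only [hiA, hiB, if_true, if_false]
    constructor <;> intros <;> linarith [(hA i hiA).1]
  by_cases hiB : i ∈ B
  · filter_upwards [nhdsWithin_le_nhds (eventually_pos_add_mul one_pos (β i))] with ε hε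
    simp only [hiA, hiB, if_true, if_false, hB i hiB]
    constructor <;> intros <;> linarith
  rcases (ha i).lt_or_eq with hai | hai
  · filter_upwards [nhdsWithin_le_nhds (eventually_pos_add_mul hai (β i))] with ε hε
    simp only [hiA, hiB, if_false]
    constructor <;> intros <;> linarith
  · filter_upwards [self_mem_nhdsWithin] with ε (hε : 0 < ε)
    have := mul_nonneg hε.le (hβ i hiB hai.symm)
    simp only [hiA, hiB, if_false, ← hai]
    constructor <;> intros <;> linarith

variable {E : Type*} [AddCommGroup E] [Module ℝ E] [TopologicalSpace E]
  [IsTopologicalAddGroup E] [ContinuousConstSMul ℝ E]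

theorem add_sum_sub_sum_mem_interior [Fintype ι] {κ : Type*} [Fintype κ] {C : PointedCone ℝ E}
    {v : ι → E} {w : κ → E} {c : κ → ℝ} (hv : ∀ i, v i ∈ C) (hw : ∀ t, w t ∈ C)
    (hx : ∑ i, a i • v i ∈ interior (C : Set E)) (hy : ∑ i, β i • v i = ∑ t, c t • w t)
    (ha : ∀ i, 0 ≤ a i) (hA : ∀ i ∈ A, 1 ≤ a i ∧ 0 < β i) (hB : ∀ i ∈ B, a i = 0)
    (hβ : ∀ i ∉ B, a i = 0 → 0 ≤ β i) :
    ∑ i, a i • v i + ∑ t, w t + ∑ i ∈ B, v i - ∑ i ∈ A, v i ∈ interior (C : Set E) := by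
  have hsmall : ∀ᶠ ε in 𝓝[>] (0 : ℝ), (∀ i,
      let μ := a i + ε * β i - (if i ∈ A then 1 else 0) + (if i ∈ B then 1 else 0)
      0 ≤ μ ∧ (0 < a i → 0 < μ)) ∧ ∀ t, 0 < 1 + ε * -c t :=
    (eventually_all.2 (eventually_coeff_nonneg_and_pos ha hA hB hβ)).and
      (eventually_all.2 fun t => nhdsWithin_le_nhds (eventually_pos_add_mul one_pos (-c t)))
  obtain ⟨ε, hμ, hct⟩ := hsmall.exists
  -- `y` enters with the small weight `ε`, once through the `v i` and once through the `w t`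
  have hsplit : ∑ i, a i • v i + ∑ t, w t + ∑ i ∈ B, v i - ∑ i ∈ A, v i =
      ∑ i, (a i + ε * β i - (if i ∈ A then 1 else 0) + (if i ∈ B then 1 else 0)) • v i +
        ∑ t, (1 + ε * -c t) • w t := by
    simp only [add_smul, sub_smul, ite_smul, one_smul, zero_smul, Finset.sum_add_distrib,
      Finset.sum_sub_distrib, Finset.sum_ite_mem, Finset.univ_inter, mul_smul, neg_smul,
      smul_neg, Finset.sum_neg_distrib, ← Finset.smul_sum, hy]
    abel
  rw [hsplit]
  exact PointedCone.add_mem_interior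
    (PointedCone.sum_smul_mem_interior hv hx (fun i => (hμ i).1) (fun i => (hμ i).2))
    (C.sum_mem fun t _ => C.smul_mem (hct t).le (hw t))

open Classical in
theorem add_sum_sub_sum_mem_interior_hull [Fintype ι] {κ : Type*} [Fintype κ] {P : Set E}
    {v : ι → E} {w : κ → E} {b : E → ι → ℝ} {x y : E} {c : κ → ℝ} (hv : ∀ i, v i ∈ P)
    (hw : ∀ t, w t ∈ P) (hb : ∀ y, y = ∑ i, b y i • v i) (hxb : ∀ i, 0 ≤ b x i)
    (hx : x ∈ interior (PointedCone.hull ℝ P : Set E)) (hy : y = ∑ t, c t • w t) :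
    x + ∑ t, w t + ∑ i ∈ Finset.univ.filter (fun i => b x i = 0 ∧ b y i < 0), v i -
        ∑ j ∈ Finset.univ.filter (fun j => (∃ m : ℤ, 0 < m ∧ b x j = m) ∧ 0 < b y j), v j ∈
      interior (PointedCone.hull ℝ P : Set E) := by
  set A := Finset.univ.filter fun j => (∃ m : ℤ, 0 < m ∧ b x j = m) ∧ 0 < b y j
  set B := Finset.univ.filter fun i => b x i = 0 ∧ b y i < 0
  have hA : ∀ j ∈ A, 1 ≤ b x j ∧ 0 < b y j := fun j hj => by
    obtain ⟨⟨m, hm, hxm⟩, hy⟩ := (Finset.mem_filter.1 hj).2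
    exact ⟨hxm ▸ by exact_mod_cast hm, hy⟩
  have hB : ∀ i ∈ B, b x i = 0 := fun i hi => (Finset.mem_filter.1 hi).2.1
  have hβ : ∀ i ∉ B, b x i = 0 → 0 ≤ b y i := fun i hi hx0 =>
    not_lt.1 fun hneg => hi (Finset.mem_filter.2 ⟨Finset.mem_univ i, hx0, hneg⟩)
  have hshift := add_sum_sub_sum_mem_interior (fun i => PointedCone.subset_hull (hv i))
    (fun t => PointedCone.subset_hull (hw t)) (hb x ▸ hx) ((hb y).symm.trans hy) hxb hA hB hβ
  rwa [← hb x] at hshift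

end Shift

theorem statement7_general (n d : ℕ) (P : Set (Fin (n + 1) → ℝ))
    (v : Fin (n + 1) → Fin (n + 1) → ℝ) (b : (Fin (n + 1) → ℝ) → Fin (n + 1) → ℝ)
    (x : Fin (n + 1) → ℝ)
    (hP : IsLatticePolytope P)
    (hPdim : Module.finrank ℝ (vectorSpan ℝ P) = n)
    (hheight : ∀ p ∈ P, p (Fin.last n) = 1)
    (hNoInt : ∀ z : Fin (n + 1) → ℤ,
      (fun i => (z i : ℝ)) ∉ intrinsicInterior ℝ (((n - d : ℕ) : ℝ) • P))
    (hxint : IsLatticePoint x)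
    (hxmem : x ∈ intrinsicInterior ℝ (((n - d + 1 : ℕ) : ℝ) • P))
    (hvint : ∀ i, IsLatticePoint (v i))
    (hvmem : ∀ i, v i ∈ P)
    (hb : ∀ y : Fin (n + 1) → ℝ, y = ∑ i, b y i • v i)
    (hxcone : ∀ i, 0 ≤ b x i)
    (k : ℕ) (y : Fin (n + 1) → ℝ)
    (hy : ∃ (w : Fin k → Fin (n + 1) → ℝ) (c : Fin k → ℝ),
      (∀ t, w t ∈ Set.extremePoints ℝ P) ∧ (∀ t, 0 ≤ c t) ∧ y = ∑ t, c t • w t) :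
    Set.ncard {j : Fin (n + 1) | (∃ m : ℤ, 0 < m ∧ b x j = (m : ℝ)) ∧ 0 < b y j} ≤
      Set.ncard {i : Fin (n + 1) | b x i = 0 ∧ b y i < 0} + k := by
  classical
  obtain ⟨w, c, hwext, -, hy⟩ := hy
  obtain ⟨V, ⟨p₀, hp₀⟩, hVlat, rfl⟩ := hP
  have hne := (convexHull_nonempty_iff (𝕜 := ℝ)).2 ⟨p₀, hp₀⟩
  have hwP t := extremePoints_subset (hwext t)
  set ℓ : (Fin (n + 1) → ℝ) →L[ℝ] ℝ := .proj (Fin.last n)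
  have hslice {c : ℝ} (hc : 0 < c) z := mem_intrinsicInterior_smul_iff (convex_convexHull ℝ _)
    hne (coe_affineSpan_eq_preimage (ℓ := ℓ) hheight hne.some_mem
      (by rw [hPdim, Module.finrank_fin_fun])) hc (z := z)
  obtain ⟨hxC, hxℓ⟩ := (hslice (by positivity) x).1 hxmem
  rw [← Finset.coe_filter_univ, ← Finset.coe_filter_univ, Set.ncard_coe_finset,
    Set.ncard_coe_finset]
  set A := Finset.univ.filter fun j => (∃ m : ℤ, 0 < m ∧ b x j = (m : ℝ)) ∧ 0 < b y j
  set B := Finset.univ.filter fun i => b x i = 0 ∧ b y i < 0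
  by_contra! hlt
  obtain ⟨N, hN⟩ := Nat.exists_eq_add_of_lt hlt
  have hwlat t : IsLatticePoint (w t) := hVlat _ (extremePoints_convexHull_subset (hwext t))
  obtain ⟨z, hz⟩ := IsLatticePoint.exists_intCast_eq (show
      x + ∑ t, w t + ∑ i ∈ B, v i - ∑ i ∈ A, v i + N • v 0 ∈ latticePoints (n + 1) from
    add_mem (sub_mem (add_mem (add_mem hxint (sum_mem fun t _ => hwlat t))
      (sum_mem fun i _ => hvint i)) (sum_mem fun i _ => hvint i)) (nsmul_mem (hvint 0) N))
  have hzC := PointedCone.add_mem_interior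
    (add_sum_sub_sum_mem_interior_hull hvmem hwP hb hxcone hxC hy)
    (nsmul_mem (PointedCone.subset_hull (hvmem 0)) N)
  have hzℓ := apply_add_sum_sub_sum_add_nsmul (ℓ := ℓ) (fun i => hheight _ (hvmem i))
    (fun t => hheight _ (hwP t)) x A B N 0
  rw [hxℓ, hN] at hzℓ
  have hm : (0 : ℝ) < (n - d : ℕ) := mod_cast pos_of_forall_notMem_intrinsicInterior_smul hne hNoInt
  refine hNoInt z (hz ▸ (hslice hm _).2 ⟨hzC, hzℓ.trans ?_⟩)
  push_cast
  ring

/-- (Lemma 2.5 / `bound V+`.) If `y` is a point in the cone spanned by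
`k` vertices of `P`, then `|V⁺(y)| ≤ |Z⁻(y)| + k`. -/
theorem statement7 (n d : ℕ) (P : Set (Fin (n + 1) → ℝ))
    (v : Fin (n + 1) → Fin (n + 1) → ℝ) (b : (Fin (n + 1) → ℝ) → Fin (n + 1) → ℝ)
    (x : Fin (n + 1) → ℝ)
    (hP : IsLatticePolytope P)
    (hPdim : Module.finrank ℝ (vectorSpan ℝ P) = n)
    (hheight : ∀ p ∈ P, p (Fin.last n) = 1)
    (hdn : d ≤ n)
    (hNoInt : ∀ z : Fin (n + 1) → ℤ,
      (fun i => (z i : ℝ)) ∉ intrinsicInterior ℝ (((n - d : ℕ) : ℝ) • P))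
    (hxint : IsLatticePoint x)
    (hxmem : x ∈ intrinsicInterior ℝ (((n - d + 1 : ℕ) : ℝ) • P))
    (hvint : ∀ i, IsLatticePoint (v i))
    (hvmem : ∀ i, v i ∈ P)
    (hvaff : AffineIndependent ℝ v)
    (hb : ∀ y : Fin (n + 1) → ℝ, y = ∑ i, b y i • v i)
    (hxcone : ∀ i, 0 ≤ b x i)
    (k : ℕ) (y : Fin (n + 1) → ℝ)
    (hy : ∃ (w : Fin k → Fin (n + 1) → ℝ) (c : Fin k → ℝ),
      (∀ t, w t ∈ Set.extremePoints ℝ P) ∧ (∀ t, 0 ≤ c t) ∧ y = ∑ t, c t • w t) :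
    Set.ncard {j : Fin (n + 1) | (∃ m : ℤ, 0 < m ∧ b x j = (m : ℝ)) ∧ 0 < b y j} ≤
      Set.ncard {i : Fin (n + 1) | b x i = 0 ∧ b y i < 0} + k :=
  statement7_general n d P v b x hP hPdim hheight hNoInt hxint hxmem hvint hvmem hb hxcone k y hy

end
end

section
/- Let d ≥ 1 and let S be the standard unimodular simplex of dimension 2d − 1, i.e. the convex hull of 0, e_1, …, e_{2d−1} in ℝ^{2d−1}. Then 2S is a Gorenstein polytope of degree d, and 2S admits no nontrivial Cayley decomposition: every ℤ-affine identification of 2S with a Cayley sum P_0 * ⋯ * P_s of lattice polytopes has s = 0. (Indeed, every edge of 2S has lattice length two.) -/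
open scoped BigOperators Pointwise

noncomputable section

/-- The standard unimodular simplex in `ℝ^m`: the convex hull of `0, e_1, …, e_m`. -/
def stdUnimodularSimplex (m : ℕ) : Set (Fin m → ℝ) :=
  convexHull ℝ ({0} ∪ Set.range fun j : Fin m => fun i => if i = j then (1 : ℝ) else 0)

/-!
Adding a slack coordinate, the lattice points of `m • 2Δₙ` are the `z ∈ ℕⁿ⁺¹` with `∑ zᵢ = 2m`.
Writing `z = 2w + 𝟙_S` with `S` the set of odd coordinates, `|S| = 2i` is even and
`∑ wᵢ = m - i`, so stars and bars gives `|m • 2Δₙ ∩ ℤⁿ| = ∑ᵢ C(n+1, 2i) C(n+m-i, n)`: the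
`h*`-polynomial is `∑ᵢ C(n+1, 2i) tⁱ`, palindromic of degree `d` when `n + 1 = 2d`.

In a Cayley decomposition with `s ≥ 1`, each of the last `s` coordinates is an affine function
with values in `[0, 1]` on the polytope and integer values at lattice points. On `2Δₙ` such a
function takes values `a, b, 2b - a ∈ {0, 1}` at `0, eₖ, 2eₖ`, so `a = b` and it is constant;
but the Cayley sum meets the two distinct fibres over `0` and `e₁`.
-/

open Finset

def cornerSimplex (n : ℕ) (c : ℝ) : Set (Fin n → ℝ) :=
  {x | (∀ i, 0 ≤ x i) ∧ ∑ i, x i ≤ c}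

lemma convex_cornerSimplex (n : ℕ) (c : ℝ) : Convex ℝ (cornerSimplex n c) := by
  have hsum : IsLinearMap ℝ fun x : Fin n → ℝ => ∑ i, x i :=
    ⟨fun x y => sum_add_distrib, fun a x => (mul_sum _ _ _).symm⟩
  have : cornerSimplex n c = (⋂ i, {x | 0 ≤ x i}) ∩ {x | ∑ i, x i ≤ c} := by
    ext; simp [cornerSimplex]
  rw [this]
  exact (convex_iInter fun i => convex_halfSpace_ge (LinearMap.proj i).isLinear 0).inter
    (convex_halfSpace_le hsum c)

lemma stdUnimodularSimplex_eq_cornerSimplex (n : ℕ) :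
    stdUnimodularSimplex n = cornerSimplex n 1 := by
  have hvert :
      (fun j : Fin n => fun i => if i = j then (1 : ℝ) else 0) = fun j => Pi.single j 1 := by
    ext j i; simp [Pi.single_apply]
  simp only [stdUnimodularSimplex, hvert]
  refine subset_antisymm (convexHull_min ?_ (convex_cornerSimplex n 1)) fun x ⟨hx0, hx1⟩ => ?_
  · rintro _ (rfl | ⟨j, rfl⟩)
    · simp [cornerSimplex]
    · exact ⟨fun i => by simp [Pi.single_apply, ite_nonneg], by simp⟩
  have hmem := (convex_convexHull ℝ
      ({0} ∪ Set.range fun j : Fin n => (Pi.single j 1 : Fin n → ℝ))).sum_mem (t := univ)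
    (w := fun o : Option (Fin n) => o.elim (1 - ∑ i, x i) x)
    (z := fun o => o.elim 0 fun j => Pi.single j 1)
    (fun o _ => by cases o <;> simp [hx1, hx0])
    (by simp [Fintype.sum_option])
    (fun o _ => subset_convexHull ℝ _ (by cases o <;> simp))
  simpa [Fintype.sum_option, ← pi_eq_sum_univ'] using hmem

lemma smul_stdUnimodularSimplex {n : ℕ} {c : ℝ} (hc : 0 ≤ c) :
    c • stdUnimodularSimplex n = cornerSimplex n c := by
  rw [stdUnimodularSimplex_eq_cornerSimplex]
  rcases hc.eq_or_lt with rfl | hc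
  · rw [Set.zero_smul_set ⟨0, by simp [cornerSimplex]⟩]
    ext x
    simp only [cornerSimplex, Set.mem_ofPred_eq, Set.mem_zero]
    refine ⟨fun h => by simp [h], fun ⟨hx0, hx1⟩ => ?_⟩
    have hsum : ∑ i, x i = 0 := le_antisymm hx1 (sum_nonneg fun i _ => hx0 i)
    ext i
    exact (sum_eq_zero_iff_of_nonneg fun i _ => hx0 i).1 hsum i (mem_univ i)
  · ext x
    simp only [Set.mem_smul_set_iff_inv_smul_mem₀ hc.ne', cornerSimplex, Set.mem_ofPred_eq,
      Pi.smul_apply, smul_eq_mul, ← mul_sum]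
    simp [mul_nonneg_iff_of_pos_left (inv_pos.2 hc), inv_mul_le_one₀ hc]

lemma latticePointCount_cornerSimplex (n k : ℕ) :
    latticePointCount (cornerSimplex n k) = #(piAntidiag (univ : Finset (Fin (n + 1))) k) := by
  have himage : {z : Fin n → ℤ | (fun i => (z i : ℝ)) ∈ cornerSimplex n k} =
      (fun w : Fin (n + 1) → ℕ => fun i => (w i.succ : ℤ)) ''
        ↑(piAntidiag (univ : Finset (Fin (n + 1))) k) := by
    ext z
    simp only [cornerSimplex, Set.mem_ofPred_eq, Set.mem_image, mem_coe, mem_piAntidiag]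
    constructor
    · rintro ⟨h0, h1⟩
      lift z to Fin n → ℕ using fun i => by exact_mod_cast h0 i
      have h1 : ∑ i, z i ≤ k := by exact_mod_cast h1
      exact ⟨Fin.cons (k - ∑ i, z i) z, by simp [Fin.sum_cons, h1], rfl⟩
    · rintro ⟨w, hw, rfl⟩
      refine ⟨fun i => by positivity, ?_⟩
      rw [Fin.sum_univ_succ] at hw
      exact_mod_cast (show ∑ i : Fin n, w i.succ ≤ k by omega)
  rw [latticePointCount, himage, Set.InjOn.ncard_image, Set.ncard_coe_finset]
  intro w hw w' hw' h
  simp only [mem_coe, mem_piAntidiag, Fin.sum_univ_succ] at hw hw'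
  have htail : Fin.tail w = Fin.tail w' := funext fun i => by simpa [Fin.tail] using congrFun h i
  rw [← Fin.cons_self_tail w, ← Fin.cons_self_tail w', htail]
  congr 1
  have : ∑ i, Fin.tail w i = ∑ i, Fin.tail w' i := by rw [htail]
  simp only [Fin.tail] at this
  omega

lemma card_piAntidiag_univ_fin (n k : ℕ) :
    #(piAntidiag (univ : Finset (Fin (n + 1))) k) = (n + k).choose n := by
  have := card_finsuppAntidiag_nat_eq_choose (s := (univ : Finset (Fin (n + 1)))) k
  rw [finsuppAntidiag, card_map, card_attach] at this
  rw [this, card_univ, Fintype.card_fin, add_right_comm, Nat.add_sub_cancel, Nat.choose_symm_add]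

lemma sum_eq_two_mul_sum_div_two_add_card_odd {ι : Type*} [Fintype ι] (z : ι → ℕ) :
    ∑ j, z j = 2 * ∑ j, z j / 2 + #{j | z j % 2 = 1} := by
  rw [card_filter, mul_sum, ← sum_add_distrib]
  refine sum_congr rfl fun j _ => ?_
  split_ifs <;> omega

lemma card_piAntidiag_two_mul {ι : Type*} [Fintype ι] [DecidableEq ι] (m : ℕ) :
    #(piAntidiag (univ : Finset ι) (2 * m)) = ∑ i ∈ range (m + 1),
      (Fintype.card ι).choose (2 * i) * #(piAntidiag (univ : Finset ι) (m - i)) := by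
  have hdiv (S : Finset ι) (w : ι → ℕ) (j : ι) :
      (2 * w j + if j ∈ S then 1 else 0) / 2 = w j := by
    split_ifs <;> omega
  have hodd (S : Finset ι) (w : ι → ℕ) :
      ({j | (2 * w j + if j ∈ S then 1 else 0) % 2 = 1} : Finset ι) = S := by
    ext j
    by_cases hj : j ∈ S <;> simp [hj]
  simp_rw [← card_univ, ← card_powersetCard, ← card_product]
  rw [← card_sigma]
  symm
  refine card_nbij' (fun p j => 2 * p.2.2 j + if j ∈ p.2.1 then 1 else 0)
    (fun z => ⟨#{j | z j % 2 = 1} / 2, ({j | z j % 2 = 1} : Finset ι), fun j => z j / 2⟩)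
    ?_ ?_ ?_ ?_
  · rintro ⟨i, S, w⟩ h
    simp only [mem_coe, mem_sigma, mem_range, mem_product, mem_powersetCard, mem_piAntidiag,
      subset_univ, mem_univ, implies_true, and_true, true_and] at h ⊢
    obtain ⟨hi, hS, hw⟩ := h
    rw [sum_eq_two_mul_sum_div_two_add_card_odd]
    simp only [hdiv, hodd]
    rw [hw]
    omega
  · intro z hz
    simp only [mem_coe, mem_sigma, mem_range, mem_product, mem_powersetCard, mem_piAntidiag,
      subset_univ, mem_univ, implies_true, and_true, true_and] at hz ⊢
    rw [sum_eq_two_mul_sum_div_two_add_card_odd] at hz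
    omega
  · rintro ⟨i, S, w⟩ h
    simp only [mem_coe, mem_sigma, mem_range, mem_product, mem_powersetCard] at h
    simp only [hdiv, hodd, h.2.1.2]
    congr
    omega
  · intro z _
    ext j
    simp only [mem_filter, mem_univ, true_and]
    split_ifs <;> omega

open Polynomial

def evenBinomialPoly (N : ℕ) : ℤ[X] :=
  ∑ i ∈ range (N + 1), C (N.choose (2 * i) : ℤ) * X ^ i

lemma coeff_evenBinomialPoly (N k : ℕ) : (evenBinomialPoly N).coeff k = N.choose (2 * k) := by
  simp only [evenBinomialPoly, finsetSum_coeff, coeff_C_mul_X_pow, sum_ite_eq, mem_range]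
  split_ifs with hk
  · rfl
  · rw [Nat.choose_eq_zero_of_lt (by omega), Nat.cast_zero]

lemma natDegree_evenBinomialPoly (N : ℕ) : (evenBinomialPoly N).natDegree = N / 2 := by
  refine natDegree_eq_of_le_of_coeff_ne_zero (natDegree_le_iff_coeff_eq_zero.2 fun k hk => ?_) ?_
  · rw [coeff_evenBinomialPoly, Nat.choose_eq_zero_of_lt (by omega), Nat.cast_zero]
  · rw [coeff_evenBinomialPoly]
    exact_mod_cast (Nat.choose_pos (by omega)).ne'

lemma coeff_evenBinomialPoly_two_mul_symm {d i : ℕ} (hi : i ≤ d) :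
    (evenBinomialPoly (2 * d)).coeff i = (evenBinomialPoly (2 * d)).coeff (d - i) := by
  rw [coeff_evenBinomialPoly, coeff_evenBinomialPoly, show 2 * (d - i) = 2 * d - 2 * i by omega,
    Nat.choose_symm (by omega)]

theorem isHStarPoly_two_smul_stdUnimodularSimplex (n : ℕ) :
    IsHStarPoly ((2 : ℝ) • stdUnimodularSimplex n) (evenBinomialPoly (n + 1)) := by
  refine ⟨by rw [natDegree_evenBinomialPoly]; omega,
    fun i => by rw [coeff_evenBinomialPoly]; positivity, fun m => ?_⟩
  have hcount : latticePointCount ((m : ℝ) • (2 : ℝ) • stdUnimodularSimplex n) =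
      ∑ i ∈ range (m + 1), (n + 1).choose (2 * i) * (n + (m - i)).choose n := by
    rw [smul_smul, smul_stdUnimodularSimplex (by positivity),
      show (m : ℝ) * 2 = ((2 * m : ℕ) : ℝ) by push_cast; ring, latticePointCount_cornerSimplex,
      card_piAntidiag_two_mul, Fintype.card_fin]
    simp_rw [card_piAntidiag_univ_fin]
  have hreindex : ∑ i ∈ range (m + 1), (n + 1).choose (2 * i) * (n + (m - i)).choose n =
      ∑ i ∈ range (n + 1), (n + 1).choose (2 * i) * (n + m - i).choose n := by
    calc _ = ∑ i ∈ range (n + m + 1), (n + 1).choose (2 * i) * (n + m - i).choose n := by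
          rw [← sum_subset (range_subset_range.2 (by omega : m + 1 ≤ n + m + 1))]
          · refine sum_congr rfl fun i hi => ?_
            rw [mem_range] at hi
            rw [Nat.add_sub_assoc (by omega)]
          · intro i hi hi'
            rw [mem_range] at hi hi'
            rw [Nat.choose_eq_zero_of_lt (by omega : n + m - i < n), mul_zero]
      _ = _ := by
          refine (sum_subset (range_subset_range.2 (by omega)) fun i _ hi => ?_).symm
          rw [mem_range] at hi
          rw [Nat.choose_eq_zero_of_lt (by omega : n + 1 < 2 * i), zero_mul]
  simp only [coeff_evenBinomialPoly, hcount]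
  exact_mod_cast hreindex

lemma snd_apply_mem_Icc_of_mem_cayleySum {q s : ℕ} {Ps : Fin (s + 1) → Set (Fin q → ℝ)}
    {p : (Fin q → ℝ) × (Fin s → ℝ)} (hp : p ∈ CayleySum Ps) (i : Fin s) :
    p.2 i ∈ Set.Icc (0 : ℝ) 1 := by
  refine convexHull_min (t := (fun p : (Fin q → ℝ) × (Fin s → ℝ) => p.2 i) ⁻¹' Set.Icc 0 1)
    ?_ ((convex_Icc 0 1).linear_preimage ((LinearMap.proj i).comp (LinearMap.snd ℝ _ _))) hp
  simp only [Set.iUnion_subset_iff, Set.image_subset_iff]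
  intro j x _
  simp only [Set.mem_preimage, cayleyVertex]
  split_ifs <;> norm_num

lemma AffineMap.apply_eq_apply_zero_of_mapsTo_Icc {n : ℕ} (f : (Fin n → ℝ) →ᵃ[ℝ] ℝ)
    (hint : ∀ x, IsLatticePoint x → ∃ z : ℤ, f x = z)
    (hbdd : Set.MapsTo f ((2 : ℝ) • stdUnimodularSimplex n) (Set.Icc 0 1)) (x : Fin n → ℝ) :
    f x = f 0 := by
  have hline (k : Fin n) (c : ℝ) : f (Pi.single k c) = c * f.linear (Pi.single k 1) + f 0 := by
    have hsingle : Pi.single k c = c • Pi.single k (1 : ℝ) := by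
      rw [← Pi.single_smul', smul_eq_mul, mul_one]
    rw [congrFun f.decomp, hsingle, Pi.add_apply, map_smul, smul_eq_mul]
  have hvalue (k : Fin n) (c : ℕ) (hc : c ≤ 2) :
      ∃ z : ℤ, f (Pi.single k (c : ℝ)) = z ∧ 0 ≤ z ∧ z ≤ 1 := by
    obtain ⟨z, hz⟩ := hint (Pi.single k (c : ℝ)) fun i =>
      ⟨if i = k then c else 0, by rw [Pi.single_apply]; split_ifs <;> simp⟩
    have hmem : Pi.single k (c : ℝ) ∈ (2 : ℝ) • stdUnimodularSimplex n := by
      rw [smul_stdUnimodularSimplex zero_le_two]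
      refine ⟨fun i => ?_, by simpa using (Nat.cast_le.2 hc : (c : ℝ) ≤ (2 : ℕ))⟩
      rw [Pi.single_apply]
      split_ifs <;> positivity
    have h01 := hbdd hmem
    rw [hz] at h01
    exact ⟨z, hz, by exact_mod_cast h01.1, by exact_mod_cast h01.2⟩
  have hbasis (k : Fin n) : f.linear (Pi.single k 1) = 0 := by
    obtain ⟨a, ha, ha0, ha1⟩ := hvalue k 0 (by norm_num)
    obtain ⟨b, hb, hb0, hb1⟩ := hvalue k 1 (by norm_num)
    obtain ⟨c, hc, hc0, hc1⟩ := hvalue k 2 le_rfl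
    rw [hline] at ha hb hc
    have hcab : (c : ℝ) = 2 * b - a := by push_cast at ha hb hc; linarith
    have hab : b = a := by
      have : c = 2 * b - a := by exact_mod_cast hcab
      omega
    push_cast at ha hb
    rw [hab] at hb
    linarith
  have hlinear : f.linear = 0 := (Pi.basisFun ℝ (Fin n)).ext fun k => by simpa using hbasis k
  rw [f.decomp, hlinear]
  simp

lemma IsLatticePolytope.nonempty {m : ℕ} {P : Set (Fin m → ℝ)} (hP : IsLatticePolytope P) :
    P.Nonempty := by
  obtain ⟨V, hV, -, rfl⟩ := hP
  exact (coe_nonempty.2 hV).convexHull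

theorem eq_zero_of_image_two_smul_stdUnimodularSimplex_eq_cayleySum {n q s : ℕ}
    {Ps : Fin (s + 1) → Set (Fin q → ℝ)} (hPs : ∀ j, (Ps j).Nonempty)
    (T : (Fin n → ℝ) →ᵃ[ℝ] (Fin q → ℝ) × (Fin s → ℝ))
    (hT : ∀ v, IsLatticePoint v → IsLatticePointPair (T v))
    (himg : T '' ((2 : ℝ) • stdUnimodularSimplex n) = CayleySum Ps) : s = 0 := by
  by_contra hs
  have hconst (x : Fin n → ℝ) : (T x).2 = (T 0).2 := funext fun i => by
    let f : (Fin n → ℝ) →ᵃ[ℝ] ℝ := (LinearMap.proj i ∘ₗ LinearMap.snd ℝ _ _).toAffineMap.comp T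
    exact f.apply_eq_apply_zero_of_mapsTo_Icc (fun v hv => (hT v hv).2 i)
      (fun y hy => snd_apply_mem_Icc_of_mem_cayleySum (himg ▸ Set.mem_image_of_mem T hy) i) x
  have hfiber (j : Fin (s + 1)) : cayleyVertex s j = (T 0).2 := by
    obtain ⟨p, hp⟩ := hPs j
    have hmem : (p, cayleyVertex s j) ∈ T '' ((2 : ℝ) • stdUnimodularSimplex n) :=
      himg ▸ subset_convexHull ℝ _ (Set.mem_iUnion.2 ⟨j, p, hp, rfl⟩)
    obtain ⟨x, -, hx⟩ := hmem
    rw [← hconst x, hx]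
  have h := congrFun ((hfiber ⟨1, by omega⟩).trans (hfiber 0).symm) ⟨0, by omega⟩
  simp [cayleyVertex] at h

/-- (Optimality of Theorem 3.1.) For `d ≥ 1`, the dilation `2S` of the
standard unimodular simplex `S` of dimension `2d − 1` is a Gorenstein polytope of degree
`d`, and `2S` admits no nontrivial Cayley decomposition: every `ℤ`-affine identification
of `2S` with a Cayley sum `P_0 * ⋯ * P_s` of lattice polytopes has `s = 0`. -/
theorem statement13 (d : ℕ) (hd : 1 ≤ d) :
    (∃ h : Polynomial ℤ,
      IsHStarPoly ((2 : ℝ) • stdUnimodularSimplex (2 * d - 1)) h ∧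
      h.natDegree = d ∧ ∀ i ≤ d, h.coeff i = h.coeff (d - i)) ∧
    ∀ (q s : ℕ) (Ps : Fin (s + 1) → Set (Fin q → ℝ))
      (T : (Fin (2 * d - 1) → ℝ) ≃ᵃ[ℝ] (Fin q → ℝ) × (Fin s → ℝ)),
      (∀ j, IsLatticePolytope (Ps j)) → IsLatticeEquiv T →
      T '' ((2 : ℝ) • stdUnimodularSimplex (2 * d - 1)) = CayleySum Ps →
      s = 0 := by
  have hH := isHStarPoly_two_smul_stdUnimodularSimplex (2 * d - 1)
  rw [Nat.sub_add_cancel (by omega)] at hH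
  refine ⟨⟨evenBinomialPoly (2 * d), hH, by rw [natDegree_evenBinomialPoly]; omega,
    fun i hi => coeff_evenBinomialPoly_two_mul_symm hi⟩, fun q s Ps T hPs hT himg => ?_⟩
  exact eq_zero_of_image_two_smul_stdUnimodularSimplex_eq_cayleySum (fun j => (hPs j).nonempty)
    T.toAffineMap (fun v hv => (hT v).1 hv) himg

end
end
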